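/- arXiv:2511.13320 — 4 statements merged into one kernel-verified Lean document; each statement's English description precedes it below -/
import Mathlib

section
/- Let $(X,d)$ be a complete separable metric space. For boundedly supported probability measures $\mu_0,\mu_1$ on $X$, the $\infty$-Wasserstein distance equals the monotone limit of the $q$-Wasserstein distances: $W_\infty(\mu_0,\mu_1)=\lim_{q\to\infty}W_q(\mu_0,\mu_1)=\sup_{q>1}W_q(\mu_0,\mu_1)$. -/
open MeasureTheory Filter Set Topology ENNReal NNReal Metric

noncomputable section

section Preamble

variable {X : Type*} [MetricSpace X]

/-- Extension of a curve on `[0,1]` to `ℝ` by projection. -/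
def cext (c : C(unitInterval, X)) (t : ℝ) : X := c (Set.projIcc 0 1 zero_le_one t)

/-- Metric speed (as an upper limit of difference quotients), with values in `ℝ≥0∞`. -/
def speed (c : C(unitInterval, X)) (t : ℝ) : ℝ≥0∞ :=
  Filter.limsup (fun h : ℝ => edist (cext c (t + h)) (cext c t) / ENNReal.ofReal |h|)
    (nhdsWithin 0 {(0 : ℝ)}ᶜ)

/-- The `q`-energy of a curve: `∫_0^1 |γ'|^q dt`. -/
def curveEnergy (q : ℝ) (c : C(unitInterval, X)) : ℝ≥0∞ :=
  ∫⁻ t in Set.Icc (0 : ℝ) 1, (speed c t) ^ q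

/-- A curve is in `AC^q` if it admits an `L^q` upper bound on its difference quotients. -/
def IsACCurve (q : ℝ) (c : C(unitInterval, X)) : Prop :=
  ∃ g : ℝ → ℝ, Measurable g ∧ (∀ t, 0 ≤ g t) ∧
    (∫⁻ t in Set.Icc (0 : ℝ) 1, ENNReal.ofReal (g t ^ q)) < ⊤ ∧
    ∀ s t : ℝ, 0 ≤ s → s ≤ t → t ≤ 1 →
      dist (cext c t) (cext c s) ≤ ∫ r in s..t, g r

instance : MeasurableSpace C(unitInterval, X) := borel _
instance : BorelSpace C(unitInterval, X) := ⟨rfl⟩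

/-- Evaluation map at time `t`. -/
def eval (t : unitInterval) (c : C(unitInterval, X)) : X := c t

/-- Kinetic `q`-energy of a plan. -/
def Keq (q : ℝ) (π : Measure C(unitInterval, X)) : ℝ≥0∞ :=
  ∫⁻ c, curveEnergy q c ∂π

/-- The (minimal) compression constant of a plan. -/
def Comp [MeasurableSpace X] (m : Measure X) (π : Measure C(unitInterval, X)) : ℝ≥0∞ :=
  sInf {C : ℝ≥0∞ | ∀ t : unitInterval, π.map (eval t) ≤ C • m}

/-- A curve is `L`-Lipschitz (with `L : ℝ≥0∞`). -/
def LipCurve (L : ℝ≥0∞) (c : C(unitInterval, X)) : Prop :=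
  ∀ s t : unitInterval, edist (c s) (c t) ≤ L * ENNReal.ofReal |(s : ℝ) - (t : ℝ)|

/-- The (minimal) Lipschitz constant of a plan. -/
def LipPlan (π : Measure C(unitInterval, X)) : ℝ≥0∞ :=
  sInf {L : ℝ≥0∞ | π {c | ¬ LipCurve L c} = 0}

/-- `q`-test plan. -/
def IsTestPlan [MeasurableSpace X] (q : ℝ) (m : Measure X)
    (π : Measure C(unitInterval, X)) : Prop :=
  IsProbabilityMeasure π ∧ Comp m π < ⊤ ∧ Keq q π < ⊤ ∧
    π {c | ¬ IsACCurve q c} = 0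

/-- `∞`-test plan. -/
def IsInftyTestPlan [MeasurableSpace X] (m : Measure X)
    (π : Measure C(unitInterval, X)) : Prop :=
  IsProbabilityMeasure π ∧ Comp m π < ⊤ ∧ LipPlan π < ⊤

/-- A plan has bounded support. -/
def PlanBddSupp (π : Measure C(unitInterval, X)) : Prop :=
  ∃ s : Set X, Bornology.IsBounded s ∧ π {c | ¬ ∀ t : unitInterval, c t ∈ s} = 0

/-- `α` is a coupling (admissible transport plan) between `μ` and `ν`. -/
def IsCoupling [MeasurableSpace X] (α : Measure (X × X)) (μ ν : Measure X) : Prop :=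
  α.map Prod.fst = μ ∧ α.map Prod.snd = ν

/-- The minimal `q`-transport cost. -/
def transportCost (q : ℝ) [MeasurableSpace X] (μ ν : Measure X) : ℝ≥0∞ :=
  ⨅ (α : Measure (X × X)) (_ : IsCoupling α μ ν),
    ∫⁻ p, edist p.1 p.2 ^ q ∂α

/-- The `q`-Wasserstein distance. -/
def Wq (q : ℝ) [MeasurableSpace X] (μ ν : Measure X) : ℝ≥0∞ :=
  (transportCost q μ ν) ^ (1 / q)

/-- The `∞`-Wasserstein distance. -/
def Winfty [MeasurableSpace X] (μ ν : Measure X) : ℝ≥0∞ :=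
  ⨅ (α : Measure (X × X)) (_ : IsCoupling α μ ν),
    essSup (fun p => edist p.1 p.2) α

/-- A geodesic curve. -/
def IsGeodesicCurve (c : C(unitInterval, X)) : Prop :=
  ∀ s t : unitInterval,
    dist (c s) (c t) = |(s : ℝ) - (t : ℝ)| * dist (c (0 : unitInterval)) (c (1 : unitInterval))

/-- `q`-optimal dynamical plan between `μ0` and `μ1`. -/
def OptGeo (q : ℝ) [MeasurableSpace X] (μ0 μ1 : Measure X)
    (π : Measure C(unitInterval, X)) : Prop :=
  IsProbabilityMeasure π ∧
  π {c | ¬ IsGeodesicCurve c} = 0 ∧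
  π.map (eval 0) = μ0 ∧ π.map (eval 1) = μ1 ∧
  (∫⁻ c, edist (c (0 : unitInterval)) (c (1 : unitInterval)) ^ q ∂π) = transportCost q μ0 μ1

/-- `∞`-optimal dynamical plan between `μ0` and `μ1`. -/
def OptGeoInfty [MeasurableSpace X] (μ0 μ1 : Measure X)
    (π : Measure C(unitInterval, X)) : Prop :=
  IsProbabilityMeasure π ∧
  π {c | ¬ IsGeodesicCurve c} = 0 ∧
  π.map (eval 0) = μ0 ∧ π.map (eval 1) = μ1 ∧
  essSup (fun c => edist (c (0 : unitInterval)) (c (1 : unitInterval))) π = Winfty μ0 μ1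

/-- A measure has bounded support. -/
def BddSupp [MeasurableSpace X] (μ : Measure X) : Prop :=
  ∃ s : Set X, Bornology.IsBounded s ∧ μ sᶜ = 0

/-- A function (density) has bounded support. -/
def BddSuppFn (ρ : X → ℝ≥0∞) : Prop :=
  ∃ s : Set X, Bornology.IsBounded s ∧ ∀ x ∉ s, ρ x = 0

/-- The affine reparametrization `r ↦ (1-r)a + rb` as a continuous map. -/
def affineIn (a b : ℝ) : C(unitInterval, ℝ) :=
  ⟨fun r => (1 - (r : ℝ)) * a + (r : ℝ) * b, by fun_prop⟩

/-- The restriction-reparametrization map `rest_a^b`. -/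
def restMap (a b : ℝ) (c : C(unitInterval, X)) : C(unitInterval, X) :=
  ⟨fun r => cext c (affineIn a b r), by
    exact (c.continuous.comp continuous_projIcc).comp (affineIn a b).continuous⟩

/-- Pointwise (local) Lipschitz constant, with values in `ℝ≥0∞`. -/
def locLip (f : X → ℝ) (x : X) : ℝ≥0∞ :=
  Filter.limsup (fun y => edist (f y) (f x) / edist y x) (nhdsWithin x {x}ᶜ)

/-- The `p`-Cheeger energy, defined by relaxation of Lipschitz functions. -/
def Cheeger (p : ℝ) [MeasurableSpace X] (m : Measure X) (f : X → ℝ) : ℝ≥0∞ :=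
  ⨅ (F : ℕ → X → ℝ) (_ : ∀ n, ∃ K : ℝ≥0, LipschitzWith K (F n))
    (_ : ∀ n, MemLp (F n) (ENNReal.ofReal p) m)
    (_ : Tendsto (fun n => eLpNorm (fun x => F n x - f x) (ENNReal.ofReal p) m)
      atTop (𝓝 0)),
    Filter.liminf (fun n => ∫⁻ x, (locLip (F n) x) ^ p ∂m) atTop

/-- The total variation, defined by relaxation of locally Lipschitz functions. -/
def totalVar [MeasurableSpace X] (m : Measure X) (f : X → ℝ) : ℝ≥0∞ :=
  ⨅ (F : ℕ → X → ℝ) (_ : ∀ n, LocallyLipschitz (F n))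
    (_ : Tendsto (fun n => eLpNorm (fun x => F n x - f x) 1 m) atTop (𝓝 0)),
    Filter.liminf (fun n => ∫⁻ x, locLip (F n) x ∂m) atTop

/-- Grid point `i/M` of `[0,1]`. -/
def gridPt (M i : ℕ) (hM : 0 < M) (h : i ≤ M) : unitInterval :=
  ⟨(i : ℝ) / M, ⟨by positivity, by
    rw [div_le_one (by exact_mod_cast hM)]
    exact_mod_cast h⟩⟩

/-- `G` is a `p`-weak upper gradient of `f` (duality with `q`-test plans). -/
def IsWeakUpperGradient (q : ℝ) [MeasurableSpace X] (m : Measure X)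
    (f : X → ℝ) (G : X → ℝ≥0∞) : Prop :=
  ∀ π : Measure C(unitInterval, X), IsTestPlan q m π →
    ∫ c, (f (c (1 : unitInterval)) - f (c (0 : unitInterval))) ∂π ≤
      (∫⁻ c, ∫⁻ t in Set.Icc (0 : ℝ) 1, G (cext c t) * speed c t ∂volume ∂π).toReal

end Preamble


section Statement1Aux

variable {X : Type*} [MetricSpace X] [MeasurableSpace X] [BorelSpace X]

set_option linter.unusedSectionVars false

lemma IsCoupling.isProbabilityMeasure {α : Measure (X × X)} {μ ν : Measure X}
    [IsProbabilityMeasure μ] (h : IsCoupling α μ ν) : IsProbabilityMeasure α := by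
  constructor
  have h1 : α.map Prod.fst Set.univ = 1 := by rw [h.1]; exact measure_univ
  rwa [Measure.map_apply measurable_fst MeasurableSet.univ, Set.preimage_univ] at h1

set_option maxHeartbeats 1000000 in
lemma winfty_le_sup [TopologicalSpace.SeparableSpace X]
    (μ ν : Measure X) [IsProbabilityMeasure μ] [IsProbabilityMeasure ν]
    (hS : (⨆ (q : ℝ) (_ : 1 < q), Wq q μ ν) ≠ ⊤) {ε : ℝ≥0} (hε : 0 < ε) :
    Winfty μ ν ≤ (⨆ (q : ℝ) (_ : 1 < q), Wq q μ ν) + 4 * ε := by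
  haveI : SecondCountableTopology X := UniformSpace.secondCountable_of_separable X
  set S := ⨆ (q : ℝ) (_ : 1 < q), Wq q μ ν with hSdef
  obtain ⟨B, hBm, hBb, hBd, hBu, hBdisj⟩ :=
    SeparableSpace.exists_measurable_partition_diam_le X (show (0:ℝ) < (ε:ℝ) from hε)
  set L : ℝ≥0∞ := S + 2 * ε with hL
  have hεtop : (ε : ℝ≥0∞) ≠ ⊤ := ENNReal.coe_ne_top
  have hε0 : (ε : ℝ≥0∞) ≠ 0 := by simpa using hε.ne'
  have hLtop : L ≠ ⊤ := by
    rw [hL]; exact ENNReal.add_ne_top.2 ⟨hS, ENNReal.mul_ne_top (by simp) hεtop⟩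
  have hL0 : L ≠ 0 := by
    rw [hL]
    intro h
    exact hε0 (by simpa [hε0] using (add_eq_zero.1 h).2)
  -- near optimal couplings
  have hex : ∀ n : ℕ, ∃ α : Measure (X × X), IsCoupling α μ ν ∧
      ∫⁻ p, edist p.1 p.2 ^ ((n : ℝ) + 2) ∂α < (S + ε) ^ ((n : ℝ) + 2) := by
    intro n
    have hn0 : (0:ℝ) < (n : ℝ) + 2 := by positivity
    have hq2 : (1:ℝ) < (n : ℝ) + 2 := by
      have : (0:ℝ) ≤ (n:ℝ) := Nat.cast_nonneg n
      linarith
    have hWq : Wq ((n : ℝ) + 2) μ ν ≤ S :=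
      le_iSup₂ (f := fun (q : ℝ) (_ : 1 < q) => Wq q μ ν) _ hq2
    have hcost : transportCost ((n : ℝ) + 2) μ ν ≤ S ^ ((n : ℝ) + 2) := by
      have h := ENNReal.rpow_le_rpow hWq hn0.le
      rwa [Wq, ← ENNReal.rpow_mul, one_div, inv_mul_cancel₀ hn0.ne', ENNReal.rpow_one] at h
    have hlt : transportCost ((n : ℝ) + 2) μ ν < (S + ε) ^ ((n : ℝ) + 2) :=
      lt_of_le_of_lt hcost
        (ENNReal.rpow_lt_rpow (ENNReal.lt_add_right hS hε0) hn0)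
    rw [transportCost] at hlt
    obtain ⟨α, hα⟩ := iInf_lt_iff.1 hlt
    obtain ⟨hc, hα⟩ := iInf_lt_iff.1 hα
    exact ⟨α, hc, hα⟩
  choose A hA hAc using hex
  -- Chebyshev bound
  set r : ℝ≥0∞ := (S + ε) / L with hr
  have hrlt : r < 1 := by
    rw [hr, ENNReal.div_lt_iff (Or.inl hL0) (Or.inl hLtop), one_mul, hL]
    refine ENNReal.add_lt_add_left hS ?_
    rw [two_mul]
    exact ENNReal.lt_add_right hεtop hε0
  have hcheb : ∀ n, A n {p : X × X | L < edist p.1 p.2} ≤ r ^ (n + 2 : ℕ) := by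
    intro n
    have hn0 : (0:ℝ) < (n : ℝ) + 2 := by positivity
    have hm : AEMeasurable (fun p : X × X => edist p.1 p.2 ^ ((n : ℝ) + 2)) (A n) :=
      ((ENNReal.continuous_rpow_const.measurable).comp measurable_edist).aemeasurable
    have h1 := mul_meas_ge_le_lintegral₀ hm (L ^ ((n : ℝ) + 2))
    have hsub : {p : X × X | L < edist p.1 p.2} ⊆
        {p : X × X | L ^ ((n : ℝ) + 2) ≤ edist p.1 p.2 ^ ((n : ℝ) + 2)} :=
      fun p hp => ENNReal.rpow_le_rpow (le_of_lt hp) hn0.le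
    have h2 : L ^ ((n : ℝ) + 2) * A n {p : X × X | L < edist p.1 p.2} ≤ (S + ε) ^ ((n : ℝ) + 2) :=
      le_trans (mul_le_mul_right (measure_mono hsub) _) (le_trans h1 (hAc n).le)
    have h3 : A n {p : X × X | L < edist p.1 p.2} ≤ (S + ε) ^ ((n : ℝ) + 2) / L ^ ((n : ℝ) + 2) := by
      rw [ENNReal.le_div_iff_mul_le (Or.inl (ENNReal.rpow_pos (pos_iff_ne_zero.2 hL0) hLtop).ne')
        (Or.inl (ENNReal.rpow_ne_top_of_nonneg hn0.le hLtop)), mul_comm]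
      exact h2
    rw [← ENNReal.div_rpow_of_nonneg _ _ hn0.le] at h3
    have : ((S + ε) / L) ^ ((n : ℝ) + 2) = r ^ (n + 2 : ℕ) := by
      rw [hr, ← ENNReal.rpow_natCast]
      norm_num
    rwa [this] at h3
  -- ultrafilter limit of discretized couplings
  let 𝒰 : Ultrafilter ℕ := Ultrafilter.of atTop
  have h𝒰 : (𝒰 : Filter ℕ) ≤ atTop := Ultrafilter.of_le atTop
  have hlim : ∀ i j : ℕ, ∃ x : ℝ≥0∞, Tendsto (fun n => A n (B i ×ˢ B j)) 𝒰 (𝓝 x) := by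
    intro i j
    obtain ⟨x, -, hx⟩ := isCompact_univ.ultrafilter_le_nhds
      (𝒰.map fun n => A n (B i ×ˢ B j)) (by simp)
    exact ⟨x, by rwa [Ultrafilter.coe_map] at hx⟩
  choose π hπ using hlim
  -- basic rectangles facts
  have hrectdisjR : ∀ (i : ℕ) ⦃j j' : ℕ⦄, j ≠ j' → Disjoint (B i ×ˢ B j) (B i ×ˢ B j') := by
    intro i j j' hne
    refine Set.disjoint_left.2 ?_
    rintro ⟨x, y⟩ ⟨hx, hy⟩ ⟨hx', hy'⟩
    exact Set.disjoint_left.1 (hBdisj hne) hy hy'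
  have hrectdisjL : ∀ (j : ℕ) ⦃i i' : ℕ⦄, i ≠ i' → Disjoint (B i ×ˢ B j) (B i' ×ˢ B j) := by
    intro j i i' hne
    refine Set.disjoint_left.2 ?_
    rintro ⟨x, y⟩ ⟨hx, hy⟩ ⟨hx', hy'⟩
    exact Set.disjoint_left.1 (hBdisj hne) hx hx'
  have hfst : ∀ n, ∀ s : Set X, MeasurableSet s → A n (s ×ˢ (univ : Set X)) = μ s := by
    intro n s hs
    rw [← (hA n).1, Measure.map_apply measurable_fst hs]
    congr 1
    ext p
    simp
  have hsnd : ∀ n, ∀ t : Set X, MeasurableSet t → A n ((univ : Set X) ×ˢ t) = ν t := by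
    intro n t ht
    rw [← (hA n).2, Measure.map_apply measurable_snd ht]
    congr 1
    ext p
    simp
  -- row sums
  have hrow_le : ∀ i, ∑' j, π i j ≤ μ (B i) := by
    intro i
    rw [ENNReal.tsum_eq_iSup_sum]
    refine iSup_le fun F => ?_
    refine le_of_tendsto (tendsto_finset_sum F fun j _ => hπ i j) (Eventually.of_forall fun n => ?_)
    have heq : ∑ j ∈ F, A n (B i ×ˢ B j) = A n (⋃ j ∈ F, B i ×ˢ B j) :=
      (measure_biUnion_finset (fun j _ j' _ hne => hrectdisjR i hne)
        (fun j _ => (hBm i).prod (hBm j))).symm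
    rw [heq]
    refine le_trans (measure_mono ?_) (hfst n (B i) (hBm i)).le
    refine Set.iUnion₂_subset fun j _ => Set.prod_mono_right (subset_univ _)
  have hcol_le : ∀ j, ∑' i, π i j ≤ ν (B j) := by
    intro j
    rw [ENNReal.tsum_eq_iSup_sum]
    refine iSup_le fun F => ?_
    refine le_of_tendsto (tendsto_finset_sum F fun i _ => hπ i j) (Eventually.of_forall fun n => ?_)
    have heq : ∑ i ∈ F, A n (B i ×ˢ B j) = A n (⋃ i ∈ F, B i ×ˢ B j) :=
      (measure_biUnion_finset (fun i _ i' _ hne => hrectdisjL j hne)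
        (fun i _ => (hBm i).prod (hBm j))).symm
    rw [heq]
    refine le_trans (measure_mono ?_) (hsnd n (B j) (hBm j)).le
    refine Set.iUnion₂_subset fun i _ => Set.prod_mono_left (subset_univ _)
  -- tails
  have hνtsum : ∑' j, ν (B j) = 1 := by
    rw [← measure_iUnion hBdisj hBm, hBu, measure_univ]
  have hμtsum : ∑' i, μ (B i) = 1 := by
    rw [← measure_iUnion hBdisj hBm, hBu, measure_univ]
  have htailν : ∀ (η : ℝ≥0), 0 < η → ∃ N : ℕ, ν ((⋃ j ∈ Finset.range N, B j)ᶜ) ≤ η := by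
    intro η hη
    have ht : Tendsto (fun N => ∑' k, ν (B (k + N))) atTop (𝓝 0) :=
      ENNReal.tendsto_sum_nat_add _ (by rw [hνtsum]; exact one_ne_top)
    obtain ⟨N, hN⟩ := (ENNReal.tendsto_atTop_zero.mp ht) η (by exact_mod_cast hη)
    refine ⟨N, le_trans (le_trans (measure_mono ?_) (measure_iUnion_le fun k => B (k + N)))
      (le_trans (le_rfl) (hN N le_rfl))⟩
    intro x hx
    have : x ∈ ⋃ j, B j := by rw [hBu]; trivial
    obtain ⟨j, hj⟩ := Set.mem_iUnion.1 this
    rcases lt_or_ge j N with h | h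
    · exact absurd (Set.mem_biUnion (Finset.mem_range.2 h) hj) hx
    · exact Set.mem_iUnion.2 ⟨j - N, by rwa [Nat.sub_add_cancel h]⟩
  have htailμ : ∀ (η : ℝ≥0), 0 < η → ∃ N : ℕ, μ ((⋃ i ∈ Finset.range N, B i)ᶜ) ≤ η := by
    intro η hη
    have ht : Tendsto (fun N => ∑' k, μ (B (k + N))) atTop (𝓝 0) :=
      ENNReal.tendsto_sum_nat_add _ (by rw [hμtsum]; exact one_ne_top)
    obtain ⟨N, hN⟩ := (ENNReal.tendsto_atTop_zero.mp ht) η (by exact_mod_cast hη)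
    refine ⟨N, le_trans (le_trans (measure_mono ?_) (measure_iUnion_le fun k => B (k + N)))
      (le_trans (le_rfl) (hN N le_rfl))⟩
    intro x hx
    have : x ∈ ⋃ i, B i := by rw [hBu]; trivial
    obtain ⟨i, hi⟩ := Set.mem_iUnion.1 this
    rcases lt_or_ge i N with h | h
    · exact absurd (Set.mem_biUnion (Finset.mem_range.2 h) hi) hx
    · exact Set.mem_iUnion.2 ⟨i - N, by rwa [Nat.sub_add_cancel h]⟩
  -- row sum equality
  have hrow : ∀ i, ∑' j, π i j = μ (B i) := by
    intro i
    refine le_antisymm (hrow_le i) ?_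
    refine ENNReal.le_of_forall_pos_le_add fun η hη _ => ?_
    obtain ⟨N, hN⟩ := htailν η hη
    set U := ⋃ j ∈ Finset.range N, B j with hU
    have hUm : MeasurableSet U := MeasurableSet.biUnion (Finset.range N).countable_toSet
      (fun j _ => hBm j)
    have hstep : ∀ n, μ (B i) ≤ (∑ j ∈ Finset.range N, A n (B i ×ˢ B j)) + ν Uᶜ := by
      intro n
      have h1 : B i ×ˢ (univ : Set X) ⊆ (B i ×ˢ U) ∪ ((univ : Set X) ×ˢ Uᶜ) := by
        rintro ⟨x, y⟩ ⟨hx, -⟩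
        by_cases hy : y ∈ U
        · exact Or.inl ⟨hx, hy⟩
        · exact Or.inr ⟨trivial, hy⟩
      have h2 : A n (B i ×ˢ U) = ∑ j ∈ Finset.range N, A n (B i ×ˢ B j) := by
        have : B i ×ˢ U = ⋃ j ∈ Finset.range N, B i ×ˢ B j := by
          ext ⟨x, y⟩
          simp only [hU, Set.mem_prod, Set.mem_iUnion, Set.mem_prod]
          tauto
        rw [this]
        exact measure_biUnion_finset (fun j _ j' _ hne => hrectdisjR i hne)
          (fun j _ => (hBm i).prod (hBm j))
      calc μ (B i) = A n (B i ×ˢ (univ : Set X)) := (hfst n (B i) (hBm i)).symm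
        _ ≤ A n (B i ×ˢ U) + A n ((univ : Set X) ×ˢ Uᶜ) :=
            le_trans (measure_mono h1) (measure_union_le _ _)
        _ = (∑ j ∈ Finset.range N, A n (B i ×ˢ B j)) + ν Uᶜ := by
            rw [h2, hsnd n Uᶜ hUm.compl]
    have hlimit : Tendsto (fun n => (∑ j ∈ Finset.range N, A n (B i ×ˢ B j)) + ν Uᶜ) 𝒰
        (𝓝 ((∑ j ∈ Finset.range N, π i j) + ν Uᶜ)) :=
      (tendsto_finset_sum _ fun j _ => hπ i j).add tendsto_const_nhds
    have h3 : μ (B i) ≤ (∑ j ∈ Finset.range N, π i j) + ν Uᶜ :=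
      ge_of_tendsto hlimit (Eventually.of_forall hstep)
    calc μ (B i) ≤ (∑ j ∈ Finset.range N, π i j) + ν Uᶜ := h3
      _ ≤ (∑' j, π i j) + η := add_le_add (ENNReal.sum_le_tsum _) hN
  -- column sum equality
  have hcol : ∀ j, ∑' i, π i j = ν (B j) := by
    intro j
    refine le_antisymm (hcol_le j) ?_
    refine ENNReal.le_of_forall_pos_le_add fun η hη _ => ?_
    obtain ⟨N, hN⟩ := htailμ η hη
    set U := ⋃ i ∈ Finset.range N, B i with hU
    have hUm : MeasurableSet U := MeasurableSet.biUnion (Finset.range N).countable_toSet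
      (fun i _ => hBm i)
    have hstep : ∀ n, ν (B j) ≤ (∑ i ∈ Finset.range N, A n (B i ×ˢ B j)) + μ Uᶜ := by
      intro n
      have h1 : (univ : Set X) ×ˢ B j ⊆ (U ×ˢ B j) ∪ (Uᶜ ×ˢ (univ : Set X)) := by
        rintro ⟨x, y⟩ ⟨-, hy⟩
        by_cases hx : x ∈ U
        · exact Or.inl ⟨hx, hy⟩
        · exact Or.inr ⟨hx, trivial⟩
      have h2 : A n (U ×ˢ B j) = ∑ i ∈ Finset.range N, A n (B i ×ˢ B j) := by
        have : U ×ˢ B j = ⋃ i ∈ Finset.range N, B i ×ˢ B j := by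
          ext ⟨x, y⟩
          simp only [hU, Set.mem_prod, Set.mem_iUnion, Set.mem_prod]
          tauto
        rw [this]
        exact measure_biUnion_finset (fun i _ i' _ hne => hrectdisjL j hne)
          (fun i _ => (hBm i).prod (hBm j))
      have h4 : A n (Uᶜ ×ˢ (univ : Set X)) = μ Uᶜ := hfst n Uᶜ hUm.compl
      calc ν (B j) = A n ((univ : Set X) ×ˢ B j) := (hsnd n (B j) (hBm j)).symm
        _ ≤ A n (U ×ˢ B j) + A n (Uᶜ ×ˢ (univ : Set X)) :=
            le_trans (measure_mono h1) (measure_union_le _ _)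
        _ = (∑ i ∈ Finset.range N, A n (B i ×ˢ B j)) + μ Uᶜ := by rw [h2, h4]
    have hlimit : Tendsto (fun n => (∑ i ∈ Finset.range N, A n (B i ×ˢ B j)) + μ Uᶜ) 𝒰
        (𝓝 ((∑ i ∈ Finset.range N, π i j) + μ Uᶜ)) :=
      (tendsto_finset_sum _ fun i _ => hπ i j).add tendsto_const_nhds
    have h3 : ν (B j) ≤ (∑ i ∈ Finset.range N, π i j) + μ Uᶜ :=
      ge_of_tendsto hlimit (Eventually.of_forall hstep)
    calc ν (B j) ≤ (∑ i ∈ Finset.range N, π i j) + μ Uᶜ := h3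
      _ ≤ (∑' i, π i j) + η := add_le_add (ENNReal.sum_le_tsum _) hN
  -- vanishing of bad pairs
  have hbad : ∀ i j, ¬(∃ x ∈ B i, ∃ y ∈ B j, edist x y ≤ L) → π i j = 0 := by
    intro i j hg
    have hsub : B i ×ˢ B j ⊆ {p : X × X | L < edist p.1 p.2} := by
      rintro ⟨x, y⟩ ⟨hx, hy⟩
      by_contra h
      exact hg ⟨x, hx, y, hy, not_lt.1 h⟩
    have hb : ∀ n, A n (B i ×ˢ B j) ≤ r ^ (n + 2 : ℕ) :=
      fun n => (measure_mono hsub).trans (hcheb n)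
    have hr0 : Tendsto (fun n : ℕ => r ^ (n + 2 : ℕ)) atTop (𝓝 0) :=
      (ENNReal.tendsto_pow_atTop_nhds_zero_of_lt_one hrlt).comp (tendsto_add_atTop_nat 2)
    have h0 : Tendsto (fun n => A n (B i ×ˢ B j)) 𝒰 (𝓝 0) :=
      tendsto_of_tendsto_of_tendsto_of_le_of_le tendsto_const_nhds (hr0.mono_left h𝒰)
        (fun n => zero_le) hb
    exact tendsto_nhds_unique (hπ i j) h0
  -- coefficient vanishing when marginal cells are null
  have hπμ0 : ∀ i j, μ (B i) = 0 → π i j = 0 := by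
    intro i j h
    exact le_antisymm (le_trans (ENNReal.le_tsum j) (le_of_le_of_eq (hrow_le i) h)) zero_le
  have hπν0 : ∀ i j, ν (B j) = 0 → π i j = 0 := by
    intro i j h
    exact le_antisymm (le_trans (ENNReal.le_tsum i) (le_of_le_of_eq (hcol_le j) h)) zero_le
  -- the glued coupling
  set β : Measure (X × X) := Measure.sum (fun ij : ℕ × ℕ =>
    (π ij.1 ij.2 * (μ (B ij.1))⁻¹ * (ν (B ij.2))⁻¹) •
      ((μ.restrict (B ij.1)).prod (ν.restrict (B ij.2)))) with hβ
  have hβapp : ∀ E : Set (X × X), MeasurableSet E → β E = ∑' ij : ℕ × ℕ,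
      (π ij.1 ij.2 * (μ (B ij.1))⁻¹ * (ν (B ij.2))⁻¹) *
        ((μ.restrict (B ij.1)).prod (ν.restrict (B ij.2))) E := by
    intro E hE
    rw [hβ, Measure.sum_apply _ hE]
    simp [Measure.smul_apply, smul_eq_mul]
  have hfstβ : β.map Prod.fst = μ := by
    refine Measure.ext fun s hs => ?_
    rw [Measure.map_apply measurable_fst hs, hβapp _ (measurable_fst hs)]
    have hrect : ∀ ij : ℕ × ℕ, ((μ.restrict (B ij.1)).prod (ν.restrict (B ij.2)))
        (Prod.fst ⁻¹' s) = μ (s ∩ B ij.1) * ν (B ij.2) := by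
      intro ij
      have hps : Prod.fst ⁻¹' s = s ×ˢ (univ : Set X) := by ext p; simp
      rw [hps, Measure.prod_prod, Measure.restrict_apply hs, Measure.restrict_apply_univ]
    calc (∑' ij : ℕ × ℕ, (π ij.1 ij.2 * (μ (B ij.1))⁻¹ * (ν (B ij.2))⁻¹) *
          ((μ.restrict (B ij.1)).prod (ν.restrict (B ij.2))) (Prod.fst ⁻¹' s))
        = ∑' i, ∑' j, (π i j * (μ (B i))⁻¹ * (ν (B j))⁻¹) * (μ (s ∩ B i) * ν (B j)) := by
          rw [ENNReal.tsum_prod']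
          exact tsum_congr fun i => tsum_congr fun j => by rw [hrect (i, j)]
      _ = ∑' i, μ (s ∩ B i) := by
          refine tsum_congr fun i => ?_
          have hin : ∀ j, (π i j * (μ (B i))⁻¹ * (ν (B j))⁻¹) * (μ (s ∩ B i) * ν (B j))
              = π i j * ((μ (B i))⁻¹ * μ (s ∩ B i)) := by
            intro j
            by_cases hν : ν (B j) = 0
            · rw [hπν0 i j hν]
              simp
            · have hone : (ν (B j))⁻¹ * ν (B j) = 1 :=
                ENNReal.inv_mul_cancel hν (measure_ne_top _ _)
              calc (π i j * (μ (B i))⁻¹ * (ν (B j))⁻¹) * (μ (s ∩ B i) * ν (B j))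
                  = (π i j * ((μ (B i))⁻¹ * μ (s ∩ B i))) * ((ν (B j))⁻¹ * ν (B j)) := by ring
                _ = π i j * ((μ (B i))⁻¹ * μ (s ∩ B i)) := by rw [hone, mul_one]
          rw [tsum_congr hin, ENNReal.tsum_mul_right, hrow i]
          by_cases hμ0 : μ (B i) = 0
          · have : μ (s ∩ B i) = 0 := measure_mono_null Set.inter_subset_right hμ0
            rw [hμ0, this]
            simp
          · rw [← mul_assoc, ENNReal.mul_inv_cancel hμ0 (measure_ne_top _ _), one_mul]
      _ = μ s := by
          rw [← measure_iUnion (fun a b hne => ((hBdisj hne).mono Set.inter_subset_right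
            Set.inter_subset_right)) (fun i => hs.inter (hBm i))]
          rw [← Set.inter_iUnion, hBu, Set.inter_univ]
  have hsndβ : β.map Prod.snd = ν := by
    refine Measure.ext fun t ht => ?_
    rw [Measure.map_apply measurable_snd ht, hβapp _ (measurable_snd ht)]
    have hrect : ∀ ij : ℕ × ℕ, ((μ.restrict (B ij.1)).prod (ν.restrict (B ij.2)))
        (Prod.snd ⁻¹' t) = μ (B ij.1) * ν (t ∩ B ij.2) := by
      intro ij
      have hps : Prod.snd ⁻¹' t = (univ : Set X) ×ˢ t := by ext p; simp
      rw [hps, Measure.prod_prod, Measure.restrict_apply ht, Measure.restrict_apply_univ]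
    calc (∑' ij : ℕ × ℕ, (π ij.1 ij.2 * (μ (B ij.1))⁻¹ * (ν (B ij.2))⁻¹) *
          ((μ.restrict (B ij.1)).prod (ν.restrict (B ij.2))) (Prod.snd ⁻¹' t))
        = ∑' j, ∑' i, (π i j * (μ (B i))⁻¹ * (ν (B j))⁻¹) * (μ (B i) * ν (t ∩ B j)) := by
          rw [ENNReal.tsum_prod', ENNReal.tsum_comm]
          exact tsum_congr fun j => tsum_congr fun i => by rw [hrect (i, j)]
      _ = ∑' j, ν (t ∩ B j) := by
          refine tsum_congr fun j => ?_
          have hin : ∀ i, (π i j * (μ (B i))⁻¹ * (ν (B j))⁻¹) * (μ (B i) * ν (t ∩ B j))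
              = π i j * ((ν (B j))⁻¹ * ν (t ∩ B j)) := by
            intro i
            by_cases hμ : μ (B i) = 0
            · rw [hπμ0 i j hμ]
              simp
            · have hone : (μ (B i))⁻¹ * μ (B i) = 1 :=
                ENNReal.inv_mul_cancel hμ (measure_ne_top _ _)
              calc (π i j * (μ (B i))⁻¹ * (ν (B j))⁻¹) * (μ (B i) * ν (t ∩ B j))
                  = (π i j * ((ν (B j))⁻¹ * ν (t ∩ B j))) * ((μ (B i))⁻¹ * μ (B i)) := by ring
                _ = π i j * ((ν (B j))⁻¹ * ν (t ∩ B j)) := by rw [hone, mul_one]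
          rw [tsum_congr hin, ENNReal.tsum_mul_right, hcol j]
          by_cases hν0 : ν (B j) = 0
          · have : ν (t ∩ B j) = 0 := measure_mono_null Set.inter_subset_right hν0
            rw [hν0, this]
            simp
          · rw [← mul_assoc, ENNReal.mul_inv_cancel hν0 (measure_ne_top _ _), one_mul]
      _ = ν t := by
          rw [← measure_iUnion (fun a b hne => ((hBdisj hne).mono Set.inter_subset_right
            Set.inter_subset_right)) (fun j => ht.inter (hBm j))]
          rw [← Set.inter_iUnion, hBu, Set.inter_univ]
  -- essSup bound
  have hE : MeasurableSet {p : X × X | L + 2 * ε < edist p.1 p.2} :=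
    measurableSet_lt measurable_const measurable_edist
  have hβE : β {p : X × X | L + 2 * ε < edist p.1 p.2} = 0 := by
    rw [hβapp _ hE]
    refine ENNReal.tsum_eq_zero.2 ?_
    rintro ⟨i, j⟩
    by_cases hg : ∃ x ∈ B i, ∃ y ∈ B j, edist x y ≤ L
    · obtain ⟨x₀, hx₀, y₀, hy₀, hd⟩ := hg
      have hrect0 : ((μ.restrict (B i)).prod (ν.restrict (B j)))
          {p : X × X | L + 2 * ε < edist p.1 p.2} = 0 := by
        rw [Measure.prod_restrict, Measure.restrict_apply hE]
        have hempty : {p : X × X | L + 2 * ε < edist p.1 p.2} ∩ B i ×ˢ B j = ∅ := by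
          refine Set.eq_empty_iff_forall_notMem.2 ?_
          rintro ⟨x, y⟩ ⟨hxy, hx, hy⟩
          have h1 : edist x x₀ ≤ (ε : ℝ≥0∞) := by
            rw [edist_dist]
            calc ENNReal.ofReal (dist x x₀) ≤ ENNReal.ofReal (ε : ℝ) :=
                  ENNReal.ofReal_le_ofReal ((dist_le_diam_of_mem (hBb i) hx hx₀).trans (hBd i))
              _ = (ε : ℝ≥0∞) := ENNReal.ofReal_coe_nnreal
          have h2 : edist y₀ y ≤ (ε : ℝ≥0∞) := by
            rw [edist_dist]
            calc ENNReal.ofReal (dist y₀ y) ≤ ENNReal.ofReal (ε : ℝ) :=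
                  ENNReal.ofReal_le_ofReal ((dist_le_diam_of_mem (hBb j) hy₀ hy).trans (hBd j))
              _ = (ε : ℝ≥0∞) := ENNReal.ofReal_coe_nnreal
          have hle : edist x y ≤ L + 2 * ε := by
            calc edist x y ≤ edist x x₀ + edist x₀ y₀ + edist y₀ y := edist_triangle4 x x₀ y₀ y
              _ ≤ (ε : ℝ≥0∞) + L + (ε : ℝ≥0∞) := add_le_add (add_le_add h1 hd) h2
              _ = L + 2 * ε := by ring
          exact absurd hxy (not_lt.2 hle)
        rw [hempty]
        exact measure_empty
      rw [hrect0, mul_zero]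
    · rw [hbad i j hg]
      simp
  have hess : essSup (fun p : X × X => edist p.1 p.2) β ≤ L + 2 * ε := by
    refine essSup_le_of_ae_le _ ?_
    rw [Filter.EventuallyLE, ae_iff]
    simpa [not_le] using hβE
  have hW : Winfty μ ν ≤ essSup (fun p : X × X => edist p.1 p.2) β :=
    iInf₂_le β ⟨hfstβ, hsndβ⟩
  calc Winfty μ ν ≤ L + 2 * ε := hW.trans hess
    _ = S + 4 * ε := by rw [hL]; ring

lemma norm_mono_exp [SecondCountableTopology X] {α : Measure (X × X)} [IsProbabilityMeasure α]
    {q q' : ℝ} (hq : 0 < q) (hqq' : q ≤ q') :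
    (∫⁻ p, edist p.1 p.2 ^ q ∂α) ^ (1/q) ≤ (∫⁻ p, edist p.1 p.2 ^ q' ∂α) ^ (1/q') := by
  have hf : AEStronglyMeasurable (fun p : X × X => (edist p.1 p.2).toReal) α :=
    (measurable_edist.ennreal_toReal).aestronglyMeasurable
  have h := eLpNorm'_le_eLpNorm'_of_exponent_le hq hqq' α hf
  have hkey : ∀ r : ℝ, eLpNorm' (fun p : X × X => (edist p.1 p.2).toReal) r α
      = (∫⁻ p, edist p.1 p.2 ^ r ∂α) ^ (1/r) := by
    intro r
    unfold eLpNorm'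
    congr 1
    refine lintegral_congr fun p => ?_
    congr 1
    simp [Real.enorm_eq_ofReal ENNReal.toReal_nonneg, ENNReal.ofReal_toReal (edist_ne_top _ _)]
  rwa [hkey q, hkey q'] at h

lemma norm_le_essSup {α : Measure (X × X)} [IsProbabilityMeasure α] {q : ℝ} (hq : 0 < q) :
    (∫⁻ p, edist p.1 p.2 ^ q ∂α) ^ (1/q) ≤ essSup (fun p : X × X => edist p.1 p.2) α := by
  set M := essSup (fun p : X × X => edist p.1 p.2) α with hM
  have h1 : ∀ᵐ p ∂α, edist p.1 p.2 ≤ M := ENNReal.ae_le_essSup _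
  have h2 : (∫⁻ p, edist p.1 p.2 ^ q ∂α) ≤ M ^ q := by
    calc (∫⁻ p, edist p.1 p.2 ^ q ∂α) ≤ ∫⁻ _, M ^ q ∂α :=
          lintegral_mono_ae (h1.mono fun p hp => ENNReal.rpow_le_rpow hp hq.le)
      _ = M ^ q := by simp
  calc (∫⁻ p, edist p.1 p.2 ^ q ∂α) ^ (1/q) ≤ (M ^ q) ^ (1/q) :=
        ENNReal.rpow_le_rpow h2 (by positivity)
    _ = M := by rw [← ENNReal.rpow_mul, mul_one_div_cancel hq.ne', ENNReal.rpow_one]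

lemma Wq_eq_iInf (q : ℝ) (hq : 0 < q) (μ ν : Measure X) :
    Wq q μ ν = ⨅ (α : Measure (X × X)) (_ : IsCoupling α μ ν),
      (∫⁻ p, edist p.1 p.2 ^ q ∂α) ^ (1/q) := by
  have h1q : 0 < 1/q := by positivity
  have h := (ENNReal.orderIsoRpow (1/q) h1q).map_iInf
    (fun α : Measure (X × X) => ⨅ (_ : IsCoupling α μ ν), ∫⁻ p, edist p.1 p.2 ^ q ∂α)
  simp only [ENNReal.orderIsoRpow_apply] at h
  rw [Wq, transportCost, h]
  refine iInf_congr fun α => ?_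
  have h2 := (ENNReal.orderIsoRpow (1/q) h1q).map_iInf
    (fun _ : IsCoupling α μ ν => ∫⁻ p, edist p.1 p.2 ^ q ∂α)
  simpa only [ENNReal.orderIsoRpow_apply] using h2


end Statement1Aux

/-- `W_∞` is the monotone limit (and supremum) of the `W_q` distances
for boundedly supported probability measures. -/
theorem statement_1 {X : Type*} [MetricSpace X] [CompleteSpace X]
    [TopologicalSpace.SeparableSpace X] [MeasurableSpace X] [BorelSpace X]
    (μ ν : Measure X) [IsProbabilityMeasure μ] [IsProbabilityMeasure ν]
    (hμ : BddSupp μ) (hν : BddSupp ν) :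
    (Winfty μ ν = ⨆ (q : ℝ) (_ : 1 < q), Wq q μ ν) ∧
    Tendsto (fun q : ℝ => Wq q μ ν) atTop (𝓝 (Winfty μ ν)) ∧
    (∀ q q' : ℝ, 1 ≤ q → q ≤ q' → Wq q μ ν ≤ Wq q' μ ν) := by
  haveI : SecondCountableTopology X := UniformSpace.secondCountable_of_separable X
  have hmono : ∀ q q' : ℝ, 1 ≤ q → q ≤ q' → Wq q μ ν ≤ Wq q' μ ν := by
    intro q q' hq hqq'
    have hq0 : (0:ℝ) < q := lt_of_lt_of_le one_pos hq
    have hq'0 : (0:ℝ) < q' := lt_of_lt_of_le hq0 hqq'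
    rw [Wq_eq_iInf q hq0, Wq_eq_iInf q' hq'0]
    refine le_iInf fun α => le_iInf fun hα => ?_
    haveI := hα.isProbabilityMeasure
    refine le_trans (iInf₂_le α hα) (norm_mono_exp hq0 hqq')
  have hle : ∀ q : ℝ, 0 < q → Wq q μ ν ≤ Winfty μ ν := by
    intro q hq0
    rw [Wq_eq_iInf q hq0, Winfty]
    refine le_iInf fun α => le_iInf fun hα => ?_
    haveI := hα.isProbabilityMeasure
    exact le_trans (iInf₂_le α hα) (norm_le_essSup hq0)
  have hsup_le : (⨆ (q : ℝ) (_ : 1 < q), Wq q μ ν) ≤ Winfty μ ν :=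
    iSup_le fun q => iSup_le fun hq => hle q (lt_trans one_pos hq)
  have heq : Winfty μ ν = ⨆ (q : ℝ) (_ : 1 < q), Wq q μ ν := by
    refine le_antisymm ?_ hsup_le
    by_cases hStop : (⨆ (q : ℝ) (_ : 1 < q), Wq q μ ν) = ⊤
    · rw [hStop]; exact le_top
    · refine ENNReal.le_of_forall_pos_le_add fun η hη _ => ?_
      have h4 : (0:ℝ≥0) < η / 4 := by positivity
      calc Winfty μ ν ≤ (⨆ (q : ℝ) (_ : 1 < q), Wq q μ ν) + 4 * ((η/4 : ℝ≥0) : ℝ≥0∞) :=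
            winfty_le_sup μ ν hStop h4
        _ = (⨆ (q : ℝ) (_ : 1 < q), Wq q μ ν) + η := by
            congr 1
            rw [show ((4:ℝ≥0∞) = ((4:ℝ≥0) : ℝ≥0∞)) by norm_num, ← ENNReal.coe_mul]
            congr 1
            rw [mul_div_cancel₀]
            norm_num
  refine ⟨heq, ?_, hmono⟩
  · rw [heq]
    have hmono' : Monotone (fun q : ℝ => Wq (max 2 q) μ ν) := by
      intro a b hab
      exact hmono _ _ (by norm_num) (max_le_max le_rfl hab)
    have hsup' : (⨆ q : ℝ, Wq (max 2 q) μ ν) = ⨆ (q : ℝ) (_ : 1 < q), Wq q μ ν := by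
      apply le_antisymm
      · refine iSup_le fun q => ?_
        exact le_iSup₂ (f := fun (q : ℝ) (_ : 1 < q) => Wq q μ ν) (max 2 q)
          (lt_of_lt_of_le one_lt_two (le_max_left _ _))
      · refine iSup₂_le fun q hq => ?_
        calc Wq q μ ν ≤ Wq (max 2 q) μ ν := hmono q _ hq.le (le_max_right _ _)
          _ ≤ ⨆ q' : ℝ, Wq (max 2 q') μ ν := le_iSup (fun q' : ℝ => Wq (max 2 q') μ ν) q
    have h1 : Tendsto (fun q : ℝ => Wq (max 2 q) μ ν) atTop
        (𝓝 (⨆ (q : ℝ) (_ : 1 < q), Wq q μ ν)) := hsup' ▸ tendsto_atTop_iSup hmono'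
    refine Tendsto.congr' ?_ h1
    filter_upwards [eventually_ge_atTop (2:ℝ)] with q hq
    rw [max_eq_right hq]
end
end

section
/- Let $(X,d,m)$ be a metric measure space, $p,q\in(1,\infty)$ Hölder conjugate, and $f\in L^p(m)$. Suppose there is $C\ge 0$ such that $\int f(\gamma_1)-f(\gamma_0)\,d\pi\le \mathrm{Comp}(\pi)^{1/p}\mathrm{Ke}_q(\pi)^{1/q} C$ for all $q$-test plans $\pi$. Then for every $N\in\mathbb{N}$ the truncation $f^N:=(-N)\vee f\wedge N$ satisfies the same inequality with the same constant $C$. -/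
open MeasureTheory Filter Set Topology ENNReal NNReal Metric

noncomputable section

/-- Truncation at level `N` is monotone and `1`-Lipschitz: if the truncations are
strictly ordered, the difference of truncations is bounded by the difference. -/
lemma trunc_diff_le {N a b : ℝ} (hN : 0 ≤ N)
    (h : max (-N) (min a N) < max (-N) (min b N)) :
    max (-N) (min b N) - max (-N) (min a N) ≤ b - a := by
  have htb : max (-N) (min b N) = min b N := by
    rcases le_total (-N) (min b N) with h' | h'
    · exact max_eq_right h'
    · exfalso
      have h1 : -N ≤ max (-N) (min a N) := le_max_left _ _
      rw [max_eq_left h'] at h; linarith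
  rcases le_total a N with h' | h'
  · have hta : a ≤ max (-N) (min a N) := by
      rw [min_eq_left h']; exact le_max_right _ _
    have hb : min b N ≤ b := min_le_left _ _
    rw [htb]; linarith
  · exfalso
    have hta : max (-N) (min a N) = N := by
      rw [min_eq_right h', max_eq_right (by linarith)]
    have : min b N ≤ N := min_le_right _ _
    rw [htb, hta] at h; linarith

/-- truncations satisfy the same integrated test-plan inequality
with the same constant. -/
theorem statement_8 {X : Type*} [MetricSpace X] [CompleteSpace X]
    [TopologicalSpace.SeparableSpace X] [MeasurableSpace X] [BorelSpace X]
    (p q : ℝ) (hp : 1 < p) (hq : 1 < q) (hpq : 1 / p + 1 / q = 1)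
    (m : Measure X) (f : X → ℝ) (hf : MemLp f (ENNReal.ofReal p) m)
    (C : ℝ≥0∞)
    (hC : ∀ π : Measure C(unitInterval, X), IsTestPlan q m π →
      ∫ c, (f (c (1 : unitInterval)) - f (c (0 : unitInterval))) ∂π ≤
        (Comp m π ^ (1 / p) * Keq q π ^ (1 / q) * C).toReal)
    (N : ℕ) :
    ∀ π : Measure C(unitInterval, X), IsTestPlan q m π →
      ∫ c, (max (-(N : ℝ)) (min (f (c (1 : unitInterval))) (N : ℝ))
            - max (-(N : ℝ)) (min (f (c (0 : unitInterval))) (N : ℝ))) ∂π ≤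
        (Comp m π ^ (1 / p) * Keq q π ^ (1 / q) * C).toReal := by
  intro π hπ
  obtain ⟨hprob, hcomp, hke, hac⟩ := hπ
  haveI := hprob
  -- evaluation maps are measurable
  have heval : ∀ t : unitInterval, Measurable (eval (X := X) t) := fun t =>
    (continuous_eval_const t).measurable
  -- measurable representative of f
  obtain ⟨g, hgsm, hfg⟩ := hf.1
  have hgm : Measurable g := hgsm.measurable
  -- a finite compression bound
  obtain ⟨K, hKmem, hKlt⟩ := sInf_lt_iff.mp hcomp
  have hKne : K ≠ ⊤ := hKlt.ne
  -- f = g π-a.e. along evaluations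
  have hnull : ∀ t : unitInterval, π {c : C(unitInterval, X) | ¬ f (c t) = g (c t)} = 0 := by
    intro t
    have hm0 : m {x | ¬ f x = g x} = 0 := ae_iff.mp hfg
    have h1 : π ((eval (X := X) t) ⁻¹' {x | ¬ f x = g x}) ≤
        (π.map (eval t)) {x | ¬ f x = g x} :=
      Measure.le_map_apply (heval t).aemeasurable _
    have h2 : (π.map (eval t)) {x | ¬ f x = g x} ≤ (K • m) {x | ¬ f x = g x} :=
      Measure.le_iff'.mp (hKmem t) _
    have h3 : (K • m) {x | ¬ f x = g x} = 0 := by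
      simp [Measure.smul_apply, hm0]
    exact le_antisymm ((h1.trans h2).trans_eq h3) zero_le
  have haef : ∀ t : unitInterval, ∀ᵐ c ∂π, f (c t) = g (c t) := fun t =>
    ae_iff.mpr (hnull t)
  -- the truncation map
  set tr : ℝ → ℝ := fun r => max (-(N : ℝ)) (min r (N : ℝ)) with htr
  have htrm : Measurable tr :=
    (continuous_const.max (continuous_id.min continuous_const)).measurable
  have htrabs : ∀ r, |tr r| ≤ (N : ℝ) := by
    intro r
    rw [abs_le]
    refine ⟨le_max_left _ _, max_le (neg_le_self (by positivity)) (min_le_right _ _)⟩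
  -- integrands
  set G1 : C(unitInterval, X) → ℝ := fun c => tr (g (c 1)) - tr (g (c 0)) with hG1
  have hG1m : Measurable G1 :=
    ((htrm.comp (hgm.comp (heval 1))).sub (htrm.comp (hgm.comp (heval 0))))
  have hG1int : Integrable G1 π := by
    refine (integrable_const (2 * (N : ℝ))).mono' hG1m.aestronglyMeasurable ?_
    filter_upwards with c
    have h1 := htrabs (g (c 1))
    have h0 := htrabs (g (c 0))
    rw [Real.norm_eq_abs]
    calc |G1 c| ≤ |tr (g (c 1))| + |tr (g (c 0))| := abs_sub _ _
      _ ≤ 2 * (N : ℝ) := by linarith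
  -- the set where the truncation increases
  set Γ : Set C(unitInterval, X) := {c | tr (g (c 0)) < tr (g (c 1))} with hΓ
  have hΓmeas : MeasurableSet Γ :=
    measurableSet_lt (htrm.comp (hgm.comp (heval 0))) (htrm.comp (hgm.comp (heval 1)))
  set a : ℝ≥0∞ := π Γ with haa
  have hatop : a ≠ ⊤ := (measure_lt_top π Γ).ne
  -- rewrite the goal integral via g
  have hA : ∫ c, (max (-(N : ℝ)) (min (f (c (1 : unitInterval))) (N : ℝ))
      - max (-(N : ℝ)) (min (f (c (0 : unitInterval))) (N : ℝ))) ∂π = ∫ c, G1 c ∂π := by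
    refine integral_congr_ae ?_
    filter_upwards [haef 0, haef 1] with c h0 h1
    rw [hG1, htr]
    simp only [h0, h1]
  rw [hA]
  by_cases ha : a = 0
  · -- trivial case: the truncation a.e. does not increase
    have hle : ∀ᵐ c ∂π, G1 c ≤ 0 := by
      rw [ae_iff]
      refine measure_mono_null (fun c hc => ?_) ha
      simp only [Set.mem_setOf_eq, not_le] at hc
      simpa [hΓ, hG1] using sub_pos.mp hc
    exact (integral_nonpos_of_ae hle).trans ENNReal.toReal_nonneg
  -- main case: restrict and renormalize
  have hainv_ne : a⁻¹ ≠ ⊤ := ENNReal.inv_ne_top.mpr ha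
  set π' : Measure C(unitInterval, X) := a⁻¹ • π.restrict Γ with hπ'
  have hπ'le : ∀ s : Set C(unitInterval, X), π s = 0 → π' s = 0 := by
    intro s hs
    have h1 : π.restrict Γ s ≤ π s := Measure.le_iff'.mp Measure.restrict_le_self s
    have h2 : π.restrict Γ s = 0 := le_antisymm (h1.trans_eq hs) zero_le
    simp [hπ', Measure.smul_apply, h2]
  haveI hprob' : IsProbabilityMeasure π' := by
    constructor
    rw [hπ', Measure.smul_apply, Measure.restrict_apply_univ, smul_eq_mul, ← haa,
      ENNReal.inv_mul_cancel ha hatop]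
  have hcomp' : Comp m π' ≤ a⁻¹ * Comp m π := by
    have key : a * Comp m π' ≤ Comp m π := by
      refine le_sInf fun K' hK' => ?_
      have hmem : Comp m π' ≤ a⁻¹ * K' := by
        refine sInf_le fun t => ?_
        rw [hπ', Measure.map_smul]
        refine Measure.le_iff.mpr fun s hs => ?_
        rw [Measure.smul_apply, smul_eq_mul, Measure.smul_apply, smul_eq_mul, mul_assoc]
        refine mul_le_mul_right ?_ _
        have h1 : (π.restrict Γ).map (eval t) s ≤ (π.map (eval t)) s :=
          Measure.le_iff'.mp (Measure.map_mono Measure.restrict_le_self (heval t)) s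
        have h2 : (π.map (eval t)) s ≤ K' * m s := by
          simpa [Measure.smul_apply] using Measure.le_iff'.mp (hK' t) s
        exact h1.trans h2
      calc a * Comp m π' ≤ a * (a⁻¹ * K') := mul_le_mul_right hmem a
        _ = K' := by rw [← mul_assoc, ENNReal.mul_inv_cancel ha hatop, one_mul]
    calc Comp m π' = a⁻¹ * (a * Comp m π') := by
          rw [← mul_assoc, ENNReal.inv_mul_cancel ha hatop, one_mul]
      _ ≤ a⁻¹ * Comp m π := mul_le_mul_right key _
  have hke' : Keq q π' ≤ a⁻¹ * Keq q π := by
    rw [Keq, hπ', lintegral_smul_measure]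
    exact mul_le_mul_right (lintegral_mono' Measure.restrict_le_self le_rfl) _
  have htp' : IsTestPlan q m π' := by
    refine ⟨hprob', hcomp'.trans_lt ?_, hke'.trans_lt ?_, hπ'le _ hac⟩
    · exact ENNReal.mul_lt_top hainv_ne.lt_top hcomp
    · exact ENNReal.mul_lt_top hainv_ne.lt_top hke
  -- integrability of g along the endpoints
  have hgp : MemLp g (ENNReal.ofReal p) m := MemLp.ae_eq hfg hf
  have hint : ∀ t : unitInterval, Integrable (fun c : C(unitInterval, X) => g (c t)) π := by
    intro t
    have h1 : MemLp g (ENNReal.ofReal p) (π.map (eval t)) := by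
      refine ⟨hgsm.aestronglyMeasurable, ?_⟩
      calc eLpNorm g (ENNReal.ofReal p) (π.map (eval t))
          ≤ eLpNorm g (ENNReal.ofReal p) (K • m) := eLpNorm_mono_measure g (hKmem t)
        _ = K ^ (1 / (ENNReal.ofReal p)).toReal • eLpNorm g (ENNReal.ofReal p) m :=
            eLpNorm_smul_measure_of_ne_top ENNReal.ofReal_ne_top g K
        _ < ⊤ := by
            rw [smul_eq_mul]
            exact ENNReal.mul_lt_top
              (ENNReal.rpow_lt_top_of_nonneg ENNReal.toReal_nonneg hKne) hgp.2
    have h2 : MemLp ((fun x => g x) ∘ (eval (X := X) t)) (ENNReal.ofReal p) π :=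
      (memLp_map_measure_iff hgsm.aestronglyMeasurable (heval t).aemeasurable).mp h1
    have h3 : (1 : ℝ≥0∞) ≤ ENNReal.ofReal p := ENNReal.one_le_ofReal.mpr hp.le
    exact h2.integrable h3
  set Gf : C(unitInterval, X) → ℝ := fun c => g (c 1) - g (c 0) with hGf
  have hGfint : Integrable Gf π := (hint 1).sub (hint 0)
  -- chain of inequalities on integrals
  have hB : ∫ c, G1 c ∂π ≤ ∫ c in Γ, G1 c ∂π := by
    have hsplit : ∫ c in Γ, G1 c ∂π + ∫ c in Γᶜ, G1 c ∂π = ∫ c, G1 c ∂π :=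
      integral_add_compl hΓmeas hG1int
    have hneg : ∫ c in Γᶜ, G1 c ∂π ≤ 0 := by
      refine setIntegral_nonpos hΓmeas.compl fun c hc => ?_
      have : ¬ tr (g (c 0)) < tr (g (c 1)) := hc
      simp only [hG1]
      linarith [le_of_not_gt this]
    linarith
  have hBC : ∫ c in Γ, G1 c ∂π ≤ ∫ c in Γ, Gf c ∂π := by
    refine setIntegral_mono_on hG1int.restrict hGfint.restrict hΓmeas fun c hc => ?_
    have hc' : tr (g (c 0)) < tr (g (c 1)) := hc
    exact trunc_diff_le (by positivity) hc'
  have haR : a.toReal ≠ 0 := ENNReal.toReal_ne_zero.mpr ⟨ha, hatop⟩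
  have hD : ∫ c in Γ, Gf c ∂π = a.toReal * ∫ c, Gf c ∂π' := by
    rw [hπ', integral_smul_measure, ENNReal.toReal_inv, smul_eq_mul, ← mul_assoc,
      mul_inv_cancel₀ haR, one_mul]
  have hEq : ∫ c, (f (c (1 : unitInterval)) - f (c (0 : unitInterval))) ∂π'
      = ∫ c, Gf c ∂π' := by
    refine integral_congr_ae ?_
    filter_upwards [ae_iff.mpr (hπ'le _ (hnull 0)), ae_iff.mpr (hπ'le _ (hnull 1))]
      with c h0 h1
    rw [hGf]
    simp only [h0, h1]
  have hCapp : ∫ c, Gf c ∂π' ≤ (Comp m π' ^ (1 / p) * Keq q π' ^ (1 / q) * C).toReal := by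
    rw [← hEq]; exact hC π' htp'
  -- combine the constants
  set P : ℝ≥0∞ := Comp m π ^ (1 / p) * Keq q π ^ (1 / q) with hP
  set P' : ℝ≥0∞ := Comp m π' ^ (1 / p) * Keq q π' ^ (1 / q) with hP'
  have hppos : (0 : ℝ) < 1 / p := by positivity
  have hqpos : (0 : ℝ) < 1 / q := by positivity
  have hPne : P ≠ ⊤ := by
    exact (ENNReal.mul_lt_top (ENNReal.rpow_lt_top_of_nonneg hppos.le hcomp.ne)
      (ENNReal.rpow_lt_top_of_nonneg hqpos.le hke.ne)).ne
  have hP'le : P' ≤ a⁻¹ * P := by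
    have h1 : P' ≤ (a⁻¹ * Comp m π) ^ (1 / p) * (a⁻¹ * Keq q π) ^ (1 / q) :=
      mul_le_mul' (ENNReal.rpow_le_rpow hcomp' hppos.le)
        (ENNReal.rpow_le_rpow hke' hqpos.le)
    have h2 : (a⁻¹ * Comp m π) ^ (1 / p) * (a⁻¹ * Keq q π) ^ (1 / q)
        = (a⁻¹ ^ (1 / p) * a⁻¹ ^ (1 / q)) * P := by
      rw [ENNReal.mul_rpow_of_nonneg _ _ hppos.le, ENNReal.mul_rpow_of_nonneg _ _ hqpos.le,
        hP]
      ring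
    have h3 : a⁻¹ ^ (1 / p) * a⁻¹ ^ (1 / q) = a⁻¹ := by
      rw [← ENNReal.rpow_add _ _ (ENNReal.inv_ne_zero.mpr hatop) hainv_ne, hpq,
        ENNReal.rpow_one]
    rw [h2, h3] at h1
    exact h1
  have hfinal : a.toReal * (P' * C).toReal ≤ (P * C).toReal := by
    by_cases hCtop : C = ⊤
    · have hP'0 : (P' * C).toReal = 0 := by
        rcases eq_or_ne P' 0 with h | h
        · simp [h]
        · rw [hCtop, ENNReal.mul_top h]; simp
      rw [hP'0, mul_zero]
      exact ENNReal.toReal_nonneg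
    · have hPC : P * C ≠ ⊤ := ENNReal.mul_ne_top hPne hCtop
      have h1 : a * (P' * C) ≤ P * C := by
        calc a * (P' * C) ≤ a * (a⁻¹ * P * C) :=
              mul_le_mul_right (mul_le_mul_left hP'le C) a
          _ = P * C := by
              rw [mul_assoc a⁻¹, ← mul_assoc a, ENNReal.mul_inv_cancel ha hatop, one_mul]
      calc a.toReal * (P' * C).toReal = (a * (P' * C)).toReal := (ENNReal.toReal_mul).symm
        _ ≤ (P * C).toReal := ENNReal.toReal_mono hPC h1
  calc ∫ c, G1 c ∂π ≤ ∫ c in Γ, G1 c ∂π := hB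
    _ ≤ ∫ c in Γ, Gf c ∂π := hBC
    _ = a.toReal * ∫ c, Gf c ∂π' := hD
    _ ≤ a.toReal * (P' * C).toReal := by
        refine mul_le_mul_of_nonneg_left ?_ ENNReal.toReal_nonneg
        rw [hP']
        exact hCapp
    _ ≤ (P * C).toReal := hfinal
end
end

section
/- Let $(X,d,m)$ be a metric measure space, $p,q\in(1,\infty)$ Hölder conjugate, and $f\in L^p(m)$. If there exists $C\ge 0$ such that $\int f(\gamma_1)-f(\gamma_0)\,d\pi\le \mathrm{Comp}(\pi)^{1/p}\mathrm{Ke}_q(\pi)^{1/q}C$ for all boundedly supported $q$-test plans $\pi$, then the same inequality (with the same $C$) holds for all $q$-test plans. -/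
open MeasureTheory Filter Set Topology ENNReal NNReal Metric

noncomputable section

/-- the integrated test-plan inequality for boundedly supported
`q`-test plans extends to all `q`-test plans. -/
theorem statement_9 {X : Type*} [MetricSpace X] [CompleteSpace X]
    [TopologicalSpace.SeparableSpace X] [MeasurableSpace X] [BorelSpace X]
    (p q : ℝ) (hp : 1 < p) (hq : 1 < q) (hpq : 1 / p + 1 / q = 1)
    (m : Measure X) (f : X → ℝ) (hf : MemLp f (ENNReal.ofReal p) m)
    (C : ℝ≥0∞)
    (hC : ∀ π : Measure C(unitInterval, X), IsTestPlan q m π → PlanBddSupp π →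
      ∫ c, (f (c (1 : unitInterval)) - f (c (0 : unitInterval))) ∂π ≤
        (Comp m π ^ (1 / p) * Keq q π ^ (1 / q) * C).toReal) :
    ∀ π : Measure C(unitInterval, X), IsTestPlan q m π →
      ∫ c, (f (c (1 : unitInterval)) - f (c (0 : unitInterval))) ∂π ≤
        (Comp m π ^ (1 / p) * Keq q π ^ (1 / q) * C).toReal := by
  intro π hπ
  obtain ⟨hprob, hcomp, hke, hac⟩ := hπ
  haveI := hprob
  set F : C(unitInterval, X) → ℝ :=
    fun c => f (c (1 : unitInterval)) - f (c (0 : unitInterval)) with hFdef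
  -- basic positivity facts
  have hp0 : (0 : ℝ) < p := lt_trans one_pos hp
  have hq0 : (0 : ℝ) < q := lt_trans one_pos hq
  have hp0' : (0 : ℝ) ≤ 1 / p := by positivity
  have hq0' : (0 : ℝ) ≤ 1 / q := by positivity
  -- the space of curves is nonempty
  have hne : Nonempty C(unitInterval, X) := by
    by_contra h
    rw [not_nonempty_iff] at h
    have h1 := hprob.measure_univ
    rw [Set.univ_eq_empty_iff.mpr h, measure_empty] at h1
    exact zero_ne_one h1
  obtain ⟨c₀⟩ := hne
  set x₀ : X := c₀ 0 with hx₀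
  -- evaluation maps are measurable
  have heval : ∀ t : unitInterval, Measurable (eval (X := X) t) := by
    intro t
    exact (continuous_eval_const t).measurable
  -- the exhausting sequence of sets of curves
  set Γ : ℕ → Set C(unitInterval, X) :=
    fun n => {c | ∀ t : unitInterval, c t ∈ Metric.closedBall x₀ n} with hΓdef
  have hΓmeas : ∀ n, MeasurableSet (Γ n) := by
    intro n
    have : Γ n = ⋂ t : unitInterval,
        (fun c : C(unitInterval, X) => c t) ⁻¹' Metric.closedBall x₀ n := by
      ext c; simp [hΓdef]
    rw [this]
    exact (isClosed_iInter fun t =>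
      Metric.isClosed_closedBall.preimage (continuous_eval_const t)).measurableSet
  have hΓmono : Monotone Γ := by
    intro i j hij c hc t
    exact Metric.closedBall_subset_closedBall (by exact_mod_cast hij) (hc t)
  have hΓunion : (⋃ n, Γ n) = Set.univ := by
    ext c
    simp only [Set.mem_iUnion, Set.mem_univ, iff_true]
    obtain ⟨r, hr⟩ := (isCompact_range c.continuous).isBounded.subset_closedBall x₀
    refine ⟨⌈r⌉₊, fun t => ?_⟩
    exact Metric.closedBall_subset_closedBall (Nat.le_ceil r) (hr ⟨t, rfl⟩)
  -- eventually the measure of `Γ n` is positive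
  obtain ⟨n₀, hn₀⟩ : ∃ n, π (Γ n) ≠ 0 := by
    by_contra h
    push_neg at h
    have : π (⋃ n, Γ n) = 0 := measure_iUnion_null h
    rw [hΓunion, measure_univ] at this
    exact one_ne_zero this
  -- a finite compression constant
  obtain ⟨C', hC'mem, hC'lt⟩ :
      ∃ C' ∈ {C : ℝ≥0∞ | ∀ t : unitInterval, π.map (eval t) ≤ C • m}, C' < ⊤ :=
    sInf_lt_iff.mp hcomp
  -- integrability of F with respect to π
  have hint : ∀ t : unitInterval, Integrable (fun c : C(unitInterval, X) => f (c t)) π := by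
    intro t
    have hmem : MemLp f (ENNReal.ofReal p) (π.map (eval t)) :=
      hf.of_measure_le_smul (c := C') hC'lt.ne (hC'mem t)
    haveI : IsProbabilityMeasure (π.map (eval t)) :=
      Measure.isProbabilityMeasure_map (heval t).aemeasurable
    have h2 : Integrable f (π.map (eval t)) :=
      hmem.integrable (ENNReal.one_le_ofReal.mpr hp.le)
    exact (integrable_map_measure hmem.1 (heval t).aemeasurable).mp h2
  have hFint : Integrable F π := (hint 1).sub (hint 0)
  set R : ℝ≥0∞ := Comp m π ^ (1 / p) * Keq q π ^ (1 / q) * C with hRdef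
  -- the key estimate for each n with positive measure
  have key : ∀ n : ℕ, π (Γ n) ≠ 0 → ∫ c in Γ n, F c ∂π ≤ R.toReal := by
    intro n ha0
    set a : ℝ≥0∞ := π (Γ n) with hadef
    have hatop : a ≠ ⊤ := measure_ne_top π _
    have hia0 : a⁻¹ ≠ 0 := ENNReal.inv_ne_zero.mpr hatop
    have hiatop : a⁻¹ ≠ ⊤ := ENNReal.inv_ne_top.mpr ha0
    set πn : Measure C(unitInterval, X) := a⁻¹ • π.restrict (Γ n) with hπndef
    -- πn is a probability measure
    haveI hπnprob : IsProbabilityMeasure πn := by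
      constructor
      rw [hπndef, Measure.smul_apply, Measure.restrict_apply_univ, smul_eq_mul]
      exact ENNReal.inv_mul_cancel ha0 hatop
    -- compression estimate
    have hS : ∀ C'' ∈ {D : ℝ≥0∞ | ∀ t : unitInterval, π.map (eval t) ≤ D • m},
        (a⁻¹ * C'') ∈ {D : ℝ≥0∞ | ∀ t : unitInterval, πn.map (eval t) ≤ D • m} := by
      intro C'' hC'' t
      rw [hπndef, Measure.map_smul]
      calc a⁻¹ • (π.restrict (Γ n)).map (eval t)
          ≤ a⁻¹ • π.map (eval t) := by
            refine Measure.le_iff'.mpr fun s => ?_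
            simp only [Measure.smul_apply, smul_eq_mul]
            exact mul_le_mul_right
              (Measure.le_iff'.mp (Measure.map_mono Measure.restrict_le_self (heval t)) s) _
        _ ≤ a⁻¹ • (C'' • m) := by
            refine Measure.le_iff'.mpr fun s => ?_
            simp only [Measure.smul_apply, smul_eq_mul]
            exact mul_le_mul_right (Measure.le_iff'.mp (hC'' t) s) _
        _ = (a⁻¹ * C'') • m := by rw [smul_smul]
    have hcomp_n : Comp m πn ≤ a⁻¹ * Comp m π := by
      have h1 : a⁻¹ * Comp m π =
          ⨅ D : {D : ℝ≥0∞ | ∀ t : unitInterval, π.map (eval t) ≤ D • m}, a⁻¹ * (D : ℝ≥0∞) := by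
        rw [Comp, sInf_eq_iInf', ENNReal.mul_iInf_of_ne hia0 hiatop]
      rw [h1]
      exact le_iInf fun D => sInf_le (hS D.1 D.2)
    -- energy estimate
    have hkeq_n : Keq q πn ≤ a⁻¹ * Keq q π := by
      rw [Keq, hπndef, lintegral_smul_measure]
      exact mul_le_mul_right (lintegral_mono' Measure.restrict_le_self le_rfl) _
    -- πn is a test plan
    have hπntest : IsTestPlan q m πn := by
      refine ⟨hπnprob, ?_, ?_, ?_⟩
      · exact lt_of_le_of_lt (le_trans (sInf_le (hS C' hC'mem))
          le_rfl) (ENNReal.mul_lt_top hiatop.lt_top hC'lt)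
      · exact lt_of_le_of_lt hkeq_n (ENNReal.mul_lt_top hiatop.lt_top hke)
      · have h1 : π.restrict (Γ n) {c | ¬IsACCurve q c} = 0 :=
          le_antisymm (hac ▸ Measure.le_iff'.mp Measure.restrict_le_self _) zero_le
        rw [hπndef, Measure.smul_apply, h1, smul_eq_mul, mul_zero]
    -- πn has bounded support
    have hπnbdd : PlanBddSupp πn := by
      refine ⟨Metric.closedBall x₀ n, Metric.isBounded_closedBall, ?_⟩
      have hset : {c : C(unitInterval, X) |
          ¬∀ t : unitInterval, c t ∈ Metric.closedBall x₀ n} = (Γ n)ᶜ := by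
        ext c; simp [hΓdef]
      rw [hset, hπndef, Measure.smul_apply,
        Measure.restrict_apply (hΓmeas n).compl, Set.compl_inter_self,
        measure_empty, smul_eq_mul, mul_zero]
    -- apply the hypothesis
    have hCn := hC πn hπntest hπnbdd
    have hInt_n : ∫ c, (f (c (1 : unitInterval)) - f (c (0 : unitInterval))) ∂πn
        = a⁻¹.toReal * ∫ c in Γ n, F c ∂π := by
      rw [hπndef, integral_smul_measure, smul_eq_mul]
    have hiapos : 0 < a⁻¹.toReal := ENNReal.toReal_pos hia0 hiatop
    -- the quantity on the right for πn
    have hRn : Comp m πn ^ (1 / p) * Keq q πn ^ (1 / q) * C ≤ a⁻¹ * R := by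
      have hpow : a⁻¹ ^ (1 / p) * a⁻¹ ^ (1 / q) = a⁻¹ := by
        rw [← ENNReal.rpow_add _ _ hia0 hiatop, hpq, ENNReal.rpow_one]
      calc Comp m πn ^ (1 / p) * Keq q πn ^ (1 / q) * C
          ≤ (a⁻¹ * Comp m π) ^ (1 / p) * (a⁻¹ * Keq q π) ^ (1 / q) * C :=
            mul_le_mul' (mul_le_mul' (ENNReal.rpow_le_rpow hcomp_n hp0')
              (ENNReal.rpow_le_rpow hkeq_n hq0')) le_rfl
        _ = (a⁻¹ ^ (1 / p) * a⁻¹ ^ (1 / q)) * (Comp m π ^ (1 / p) * Keq q π ^ (1 / q) * C) := by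
            rw [ENNReal.mul_rpow_of_nonneg _ _ hp0', ENNReal.mul_rpow_of_nonneg _ _ hq0']
            ring
        _ = a⁻¹ * R := by rw [hpow, hRdef]
    by_cases hCtop : C = ⊤
    · -- infinite case: all the `toReal`s are zero
      have hzero : ∀ x : ℝ≥0∞, (x * C).toReal = 0 := by
        intro x
        rcases eq_or_ne x 0 with hx | hx
        · simp [hx]
        · rw [hCtop, ENNReal.mul_top hx, ENNReal.toReal_top]
      have h1 : (Comp m πn ^ (1 / p) * Keq q πn ^ (1 / q) * C).toReal = 0 := hzero _
      have h2 : R.toReal = 0 := by rw [hRdef]; exact hzero _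
      rw [h1, hInt_n] at hCn
      rw [h2]
      nlinarith [hCn, hiapos]
    · -- finite case
      have hRtop : R ≠ ⊤ := by
        rw [hRdef]
        exact ENNReal.mul_ne_top (ENNReal.mul_ne_top
          (ENNReal.rpow_ne_top_of_nonneg hp0' hcomp.ne)
          (ENNReal.rpow_ne_top_of_nonneg hq0' hke.ne)) hCtop
      have h3 : (Comp m πn ^ (1 / p) * Keq q πn ^ (1 / q) * C).toReal
          ≤ (a⁻¹ * R).toReal :=
        ENNReal.toReal_mono (ENNReal.mul_ne_top hiatop hRtop) hRn
      have h4 : (a⁻¹ * R).toReal = a⁻¹.toReal * R.toReal := ENNReal.toReal_mul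
      rw [hInt_n] at hCn
      have h5 : a⁻¹.toReal * ∫ c in Γ n, F c ∂π ≤ a⁻¹.toReal * R.toReal := by
        calc a⁻¹.toReal * ∫ c in Γ n, F c ∂π ≤ _ := hCn
          _ ≤ (a⁻¹ * R).toReal := h3
          _ = a⁻¹.toReal * R.toReal := h4
      exact le_of_mul_le_mul_left h5 hiapos
  -- pass to the limit
  have htend : Tendsto (fun n => ∫ c in Γ n, F c ∂π) atTop (𝓝 (∫ c, F c ∂π)) := by
    have := tendsto_setIntegral_of_monotone hΓmeas hΓmono
      (by rw [hΓunion]; exact hFint.integrableOn : IntegrableOn F (⋃ n, Γ n) π)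
    rwa [hΓunion, setIntegral_univ] at this
  refine le_of_tendsto htend ?_
  filter_upwards [eventually_ge_atTop n₀] with n hn
  exact key n fun h => hn₀ (le_antisymm (h ▸ measure_mono (hΓmono hn)) zero_le)
end
end

section
/- Let $(X,d,m)$ be a metric measure space and $f\in L^1(m)$. Suppose there exists $C>0$ such that $\int f(\gamma_1)-f(\gamma_0)\,d\pi\le \mathrm{Comp}(\pi)\,\mathrm{Lip}(\pi)\,C$ for all boundedly supported $\infty$-test plans $\pi$. Then the same inequality, with the same constant $C$, holds for all $\infty$-test plans. -/
open MeasureTheory Filter Set Topology ENNReal NNReal Metric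

noncomputable section

/-- the BV test-plan inequality for boundedly supported `∞`-test plans
extends to all `∞`-test plans, with the same constant. -/
theorem statement_15 {X : Type*} [MetricSpace X] [CompleteSpace X]
    [TopologicalSpace.SeparableSpace X] [MeasurableSpace X] [BorelSpace X]
    (m : Measure X) (f : X → ℝ) (hf : MemLp f 1 m)
    (C : ℝ) (hC : 0 < C)
    (h : ∀ π : Measure C(unitInterval, X), IsInftyTestPlan m π → PlanBddSupp π →
      ∫ c, (f (c (1 : unitInterval)) - f (c (0 : unitInterval))) ∂π ≤
        (Comp m π * LipPlan π).toReal * C) :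
    ∀ π : Measure C(unitInterval, X), IsInftyTestPlan m π →
      ∫ c, (f (c (1 : unitInterval)) - f (c (0 : unitInterval))) ∂π ≤
        (Comp m π * LipPlan π).toReal * C := by
  intro π hπ
  obtain ⟨hprob, hcomp, hlip⟩ := hπ
  have hmeval : ∀ t : unitInterval, Measurable (eval t : C(unitInterval, X) → X) :=
    fun t => (continuous_eval_const t).measurable
  -- a finite compression witness
  obtain ⟨D, hD, hDlt⟩ : ∃ D ∈ {C' : ℝ≥0∞ | ∀ t : unitInterval, π.map (eval t) ≤ C' • m},
      D < ⊤ := by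
    rw [Comp] at hcomp; exact sInf_lt_iff.mp hcomp
  -- a finite Lipschitz witness
  obtain ⟨L₀, hL₀, hL₀lt⟩ : ∃ L₀ ∈ {L : ℝ≥0∞ | π {c | ¬ LipCurve L c} = 0}, L₀ < ⊤ := by
    rw [LipPlan] at hlip; exact sInf_lt_iff.mp hlip
  -- integrability of the endpoint evaluations
  have hint : ∀ t : unitInterval, Integrable (fun c : C(unitInterval, X) => f (c t)) π := by
    intro t
    have hmap_le : π.map (eval t) ≤ D • m := hD t
    have hac : π.map (eval t) ≪ m := Measure.absolutelyContinuous_of_le_smul hmap_le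
    have hfm : AEStronglyMeasurable f (π.map (eval t)) := hf.1.mono_ac hac
    have hev : AEMeasurable (eval t) π := (hmeval t).aemeasurable
    refine ⟨hfm.comp_aemeasurable hev, ?_⟩
    show (∫⁻ c, ‖f (c t)‖₊ ∂π) < ⊤
    calc (∫⁻ c, (‖f (c t)‖₊ : ℝ≥0∞) ∂π) = ∫⁻ x, (‖f x‖₊ : ℝ≥0∞) ∂(π.map (eval t)) :=
          (lintegral_map' hfm.enorm hev).symm
      _ ≤ ∫⁻ x, (‖f x‖₊ : ℝ≥0∞) ∂(D • m) := lintegral_mono' hmap_le le_rfl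
      _ = D * ∫⁻ x, (‖f x‖₊ : ℝ≥0∞) ∂m := lintegral_smul_measure _ _
      _ < ⊤ := ENNReal.mul_lt_top hDlt
          (by have h2 := hf.2; rw [eLpNorm_one_eq_lintegral_enorm] at h2; exact h2)
  have hg_int : Integrable
      (fun c : C(unitInterval, X) => f (c (1 : unitInterval)) - f (c (0 : unitInterval))) π :=
    (hint 1).sub (hint 0)
  -- base point
  have hne : Nonempty C(unitInterval, X) := by
    by_contra hemp
    rw [not_nonempty_iff] at hemp
    have h1 := hprob.measure_univ
    rw [Set.univ_eq_empty_iff.mpr hemp] at h1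
    simp at h1
  obtain ⟨c₀⟩ := hne
  set x₀ : X := c₀ 0 with hx₀
  -- the Lipschitz set is closed
  have hLipClosed : IsClosed {c : C(unitInterval, X) | LipCurve L₀ c} := by
    have hset : {c : C(unitInterval, X) | LipCurve L₀ c} =
        ⋂ (s : unitInterval) (t : unitInterval),
          {c : C(unitInterval, X) |
            edist (c s) (c t) ≤ L₀ * ENNReal.ofReal |(s : ℝ) - (t : ℝ)|} := by
      ext c
      constructor
      · intro hc
        exact Set.mem_iInter.mpr fun s => Set.mem_iInter.mpr fun t => hc s t
      · intro hc s t
        exact Set.mem_iInter.mp (Set.mem_iInter.mp hc s) t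
    rw [hset]
    refine isClosed_iInter fun s => isClosed_iInter fun t => ?_
    exact isClosed_le (Continuous.edist (continuous_eval_const s)
      (continuous_eval_const t)) continuous_const
  -- the exhausting sets
  set Γ : ℕ → Set C(unitInterval, X) := fun n =>
    (eval (0 : unitInterval) ⁻¹' Metric.closedBall x₀ n) ∩ {c | LipCurve L₀ c} with hΓ
  have hΓmeas : ∀ n, MeasurableSet (Γ n) := fun n =>
    ((hmeval 0) measurableSet_closedBall).inter hLipClosed.measurableSet
  have hΓmono : Monotone Γ := by
    intro a b hab
    exact Set.inter_subset_inter (Set.preimage_mono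
      (Metric.closedBall_subset_closedBall (by exact_mod_cast hab))) subset_rfl
  have hΓunion : (⋃ n, Γ n) = {c : C(unitInterval, X) | LipCurve L₀ c} := by
    apply Set.eq_of_subset_of_subset
    · exact Set.iUnion_subset fun n => Set.inter_subset_right
    · intro c hc
      obtain ⟨n, hn⟩ := exists_nat_ge (dist (c (0 : unitInterval)) x₀)
      exact Set.mem_iUnion.mpr ⟨n, ⟨by simpa [eval, Metric.mem_closedBall] using hn, hc⟩⟩
  have hU0 : π (⋃ n, Γ n)ᶜ = 0 := by
    rw [hΓunion]
    simpa [Set.compl_setOf] using hL₀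
  have hU1 : π (⋃ n, Γ n) = 1 := by
    rw [measure_congr (ae_eq_univ.mpr hU0)]
    exact hprob.measure_univ
  have htm : Tendsto (fun n => π (Γ n)) atTop (𝓝 1) := by
    have := tendsto_measure_iUnion_atTop (μ := π) hΓmono
    rwa [hU1] at this
  have hpos : ∀ᶠ n in atTop, 0 < π (Γ n) :=
    htm.eventually (eventually_gt_nhds zero_lt_one)
  -- convergence of the truncated integrals
  have hrestrict_eq : π.restrict (⋃ n, Γ n) = π := by
    rw [Measure.restrict_congr_set (ae_eq_univ.mpr hU0), Measure.restrict_univ]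
  have hint_tendsto : Tendsto
      (fun n => ∫ c in Γ n, (f (c (1 : unitInterval)) - f (c (0 : unitInterval))) ∂π) atTop
      (𝓝 (∫ c, (f (c (1 : unitInterval)) - f (c (0 : unitInterval))) ∂π)) := by
    have ht := tendsto_setIntegral_of_monotone hΓmeas hΓmono hg_int.integrableOn
    rwa [hrestrict_eq] at ht
  -- the eventual bound
  have hbound : ∀ᶠ n in atTop,
      ∫ c in Γ n, (f (c (1 : unitInterval)) - f (c (0 : unitInterval))) ∂π ≤
        (Comp m π * LipPlan π).toReal * C := by
    filter_upwards [hpos] with n hn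
    set a : ℝ≥0∞ := π (Γ n) with ha
    have ha1 : a ≤ 1 := prob_le_one
    have hane : a ≠ ⊤ := (ha1.trans_lt ENNReal.one_lt_top).ne
    set πn : Measure C(unitInterval, X) := a⁻¹ • π.restrict (Γ n) with hπn
    have hπnΓ : πn (Γ n) = 1 := by
      rw [hπn, Measure.smul_apply, smul_eq_mul, Measure.restrict_apply (hΓmeas n),
        Set.inter_self, ← ha]
      exact ENNReal.inv_mul_cancel hn.ne' hane
    have hprobn : IsProbabilityMeasure πn := by
      constructor
      rw [hπn, Measure.smul_apply, smul_eq_mul, Measure.restrict_apply_univ, ← ha]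
      exact ENNReal.inv_mul_cancel hn.ne' hane
    -- compression bound for πn
    have hmapn : ∀ D' : ℝ≥0∞, (∀ t : unitInterval, π.map (eval t) ≤ D' • m) →
        ∀ t : unitInterval, πn.map (eval t) ≤ (a⁻¹ * D') • m := by
      intro D' hD' t
      refine Measure.le_iff'.mpr fun s => ?_
      have h1 : (π.restrict (Γ n)).map (eval t) s ≤ π.map (eval t) s :=
        Measure.le_iff'.mp (Measure.map_mono Measure.restrict_le_self (hmeval t)) s
      have h2 : π.map (eval t) s ≤ D' * m s := by
        have := Measure.le_iff'.mp (hD' t) s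
        simpa [Measure.smul_apply, smul_eq_mul] using this
      calc πn.map (eval t) s = a⁻¹ * (π.restrict (Γ n)).map (eval t) s := by
            rw [hπn, Measure.map_smul, Measure.smul_apply, smul_eq_mul]
        _ ≤ a⁻¹ * (D' * m s) := mul_le_mul_right (h1.trans h2) _
        _ = (a⁻¹ * D') • m s := by rw [smul_eq_mul, mul_assoc]
    have hSn : ∀ D' ∈ {C' : ℝ≥0∞ | ∀ t : unitInterval, π.map (eval t) ≤ C' • m},
        Comp m πn ≤ a⁻¹ * D' := fun D' hD' => sInf_le (hmapn D' hD')
    have hcomp_mul : a * Comp m πn ≤ Comp m π := by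
      refine le_sInf fun D' hD' => ?_
      calc a * Comp m πn ≤ a * (a⁻¹ * D') := mul_le_mul_right (hSn D' hD') a
        _ = a * a⁻¹ * D' := (mul_assoc _ _ _).symm
        _ = D' := by rw [ENNReal.mul_inv_cancel hn.ne' hane, one_mul]
    have hcompn_lt : Comp m πn < ⊤ :=
      (hSn D hD).trans_lt (ENNReal.mul_lt_top
        (by simpa using ENNReal.inv_lt_top.mpr hn) hDlt)
    -- Lipschitz bound for πn
    have hlipn_le : LipPlan πn ≤ LipPlan π := by
      refine sInf_le_sInf fun L hL => ?_
      show πn {c | ¬ LipCurve L c} = 0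
      rw [hπn, Measure.smul_apply, smul_eq_mul]
      have h0 : π.restrict (Γ n) {c | ¬ LipCurve L c} = 0 :=
        le_antisymm ((Measure.restrict_apply_le _ _).trans_eq hL) (zero_le)
      rw [h0, mul_zero]
    have hlipn_lt : LipPlan πn < ⊤ := hlipn_le.trans_lt hlip
    have htest : IsInftyTestPlan m πn := ⟨hprobn, hcompn_lt, hlipn_lt⟩
    -- bounded support
    have hbdd : PlanBddSupp πn := by
      refine ⟨Metric.closedBall x₀ ((n : ℝ) + L₀.toReal), Metric.isBounded_closedBall, ?_⟩
      have hsub : {c : C(unitInterval, X) |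
          ¬ ∀ t : unitInterval, c t ∈ Metric.closedBall x₀ ((n : ℝ) + L₀.toReal)} ⊆ (Γ n)ᶜ := by
        intro c hc hcΓ
        apply hc
        intro t
        obtain ⟨hc0, hlipc⟩ := hcΓ
        have h1 : edist (c t) (c (0 : unitInterval)) ≤ L₀ := by
          calc edist (c t) (c (0 : unitInterval)) ≤
              L₀ * ENNReal.ofReal |(t : ℝ) - ((0 : unitInterval) : ℝ)| := hlipc t 0
            _ ≤ L₀ * 1 := by
                gcongr
                rw [ENNReal.ofReal_le_one]
                simpa [abs_of_nonneg t.2.1] using t.2.2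
            _ = L₀ := mul_one _
        have h2 : dist (c t) (c (0 : unitInterval)) ≤ L₀.toReal := by
          rw [dist_edist]
          exact ENNReal.toReal_mono hL₀lt.ne h1
        have h3 : dist (c (0 : unitInterval)) x₀ ≤ (n : ℝ) := by
          simpa [eval, Metric.mem_closedBall] using hc0
        rw [Metric.mem_closedBall]
        calc dist (c t) x₀ ≤ dist (c t) (c (0 : unitInterval)) + dist (c (0 : unitInterval)) x₀ :=
              dist_triangle _ _ _
          _ ≤ L₀.toReal + (n : ℝ) := add_le_add h2 h3
          _ = (n : ℝ) + L₀.toReal := add_comm _ _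
      have hcompl : πn (Γ n)ᶜ = 0 := by
        rw [hπn, Measure.smul_apply, smul_eq_mul, Measure.restrict_apply (hΓmeas n).compl]
        simp
      exact measure_mono_null hsub hcompl
    -- apply the hypothesis to πn
    have hmain := h πn htest hbdd
    have hInt_eq : ∫ c, (f (c (1 : unitInterval)) - f (c (0 : unitInterval))) ∂πn =
        (a⁻¹).toReal * ∫ c in Γ n, (f (c (1 : unitInterval)) - f (c (0 : unitInterval))) ∂π := by
      rw [hπn, integral_smul_measure, smul_eq_mul]
    have hfin : Comp m π * LipPlan π < ⊤ := ENNReal.mul_lt_top hcomp hlip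
    have key : a.toReal * ((Comp m πn * LipPlan πn).toReal * C) ≤
        (Comp m π * LipPlan π).toReal * C := by
      rw [← mul_assoc, ← ENNReal.toReal_mul]
      refine mul_le_mul_of_nonneg_right (ENNReal.toReal_mono hfin.ne ?_) hC.le
      calc a * (Comp m πn * LipPlan πn) = a * Comp m πn * LipPlan πn := (mul_assoc _ _ _).symm
        _ ≤ Comp m π * LipPlan π := mul_le_mul' hcomp_mul hlipn_le
    calc ∫ c in Γ n, (f (c (1 : unitInterval)) - f (c (0 : unitInterval))) ∂π
        = a.toReal * ∫ c, (f (c (1 : unitInterval)) - f (c (0 : unitInterval))) ∂πn := by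
          rw [hInt_eq, ← mul_assoc, ← ENNReal.toReal_mul,
            ENNReal.mul_inv_cancel hn.ne' hane, ENNReal.toReal_one, one_mul]
      _ ≤ a.toReal * ((Comp m πn * LipPlan πn).toReal * C) :=
          mul_le_mul_of_nonneg_left hmain ENNReal.toReal_nonneg
      _ ≤ (Comp m π * LipPlan π).toReal * C := key
  exact le_of_tendsto hint_tendsto hbound
end
end
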